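/- Let G be a graph on n vertices and let 0 < μ < 0.1. Suppose A, B, C are vertex subsets such that A is disjoint from B and from C, and either B = C or B and C are disjoint, with all of A, B, C nonempty. For vertex subsets X, Y let e(X,Y) denote the number of ordered pairs (u,v) ∈ X × Y with uv an edge of G. If e(A,B) ≥ (1−μ)|A||B|, e(A,C) ≥ (1−μ)|A||C|, and e(B,C) ≤ μ|B||C|, then the least adjacency eigenvalue of G satisfies λ_n ≤ −min(|A|, |B|, |C|)/10. -/

import Mathlib

open Matrix

open scoped Classical in
noncomputable def adjMat {V : Type*} (G : SimpleGraph V) : Matrix V V ℝ :=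
  Matrix.of fun i j => if G.Adj i j then (1 : ℝ) else 0

open scoped Classical in
noncomputable def pairCount {n : ℕ} (G : SimpleGraph (Fin n)) (X Y : Finset (Fin n)) : ℕ :=
  ((X ×ˢ Y).filter fun p => G.Adj p.1 p.2).card

open scoped Classical

noncomputable def ind {n : ℕ} (X : Finset (Fin n)) : Fin n → ℝ :=
  fun k => if k ∈ X then 1 else 0

lemma ind_dot {n : ℕ} (X Y : Finset (Fin n)) :
    ind X ⬝ᵥ ind Y = ((X ∩ Y).card : ℝ) := by
  simp only [dotProduct, ind, ite_mul, one_mul, zero_mul]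
  rw [Finset.sum_ite_mem, Finset.univ_inter, Finset.sum_ite_mem]
  simp [Finset.inter_comm]

lemma ind_quad {n : ℕ} (G : SimpleGraph (Fin n)) (X Y : Finset (Fin n)) :
    ind X ⬝ᵥ (adjMat G *ᵥ ind Y) = (pairCount G X Y : ℝ) := by
  simp only [dotProduct, Matrix.mulVec, ind, adjMat, Matrix.of_apply,
    ite_mul, mul_ite, mul_one, mul_zero, one_mul, zero_mul]
  rw [Finset.sum_ite_mem, Finset.univ_inter]
  rw [Finset.sum_congr rfl fun k _ => by
    rw [Finset.sum_ite_mem, Finset.univ_inter]]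
  rw [pairCount, Finset.card_filter, Finset.sum_product]
  push_cast
  rfl

lemma pairCount_comm {n : ℕ} (G : SimpleGraph (Fin n)) (X Y : Finset (Fin n)) :
    pairCount G X Y = pairCount G Y X := by
  unfold pairCount
  apply Finset.card_nbij (fun p => (p.2, p.1))
  · intro p hp
    simp only [Finset.mem_coe, Finset.mem_filter, Finset.mem_product] at *
    exact ⟨⟨hp.1.2, hp.1.1⟩, hp.2.symm⟩
  · intro p hp q hq h
    simpa [Prod.ext_iff, and_comm] using h
  · intro p hp
    refine ⟨(p.2, p.1), ?_, rfl⟩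
    simp only [Finset.mem_coe, Finset.mem_filter, Finset.mem_product] at *
    exact ⟨⟨hp.1.2, hp.1.1⟩, hp.2.symm⟩

lemma pairCount_le {n : ℕ} (G : SimpleGraph (Fin n)) (X Y : Finset (Fin n)) :
    (pairCount G X Y : ℝ) ≤ (X.card : ℝ) * Y.card := by
  have : pairCount G X Y ≤ (X ×ˢ Y).card := Finset.card_filter_le _ _
  rw [Finset.card_product] at this
  exact_mod_cast this

lemma rayleigh (n : ℕ) (hn : 0 < n) (G : SimpleGraph (Fin n))
    (μ : Fin n → ℝ) (v : Fin n → Fin n → ℝ)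
    (hmono : Antitone μ)
    (heig : ∀ i, (adjMat G).mulVec (v i) = μ i • v i)
    (horth : ∀ i j : Fin n, (∑ k, v i k * v j k) = if i = j then (1 : ℝ) else 0)
    (x : Fin n → ℝ) :
    μ ⟨n - 1, Nat.sub_lt hn Nat.one_pos⟩ * (x ⬝ᵥ x) ≤ x ⬝ᵥ (adjMat G *ᵥ x) := by
  set V : Matrix (Fin n) (Fin n) ℝ := Matrix.of v with hV
  have hVVt : V * Vᵀ = 1 := by
    ext i j
    simpa [Matrix.mul_apply, Matrix.one_apply, V] using horth i j
  have hVtV : Vᵀ * V = 1 := mul_eq_one_comm.mp hVVt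
  have hAVt : adjMat G * Vᵀ = Vᵀ * Matrix.diagonal μ := by
    ext k i
    rw [Matrix.mul_diagonal]
    have := congrFun (heig i) k
    simp only [Matrix.mulVec, dotProduct, Pi.smul_apply, smul_eq_mul] at this
    simp only [Matrix.mul_apply, Matrix.transpose_apply, hV, Matrix.of_apply]
    rw [this, mul_comm]
  have hA : adjMat G = Vᵀ * Matrix.diagonal μ * V := by
    calc adjMat G = adjMat G * (Vᵀ * V) := by rw [hVtV, Matrix.mul_one]
    _ = (adjMat G * Vᵀ) * V := by rw [Matrix.mul_assoc]
    _ = Vᵀ * Matrix.diagonal μ * V := by rw [hAVt]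
  set y := V *ᵥ x with hy
  have hq : x ⬝ᵥ (adjMat G *ᵥ x) = ∑ i, μ i * (y i)^2 := by
    rw [hA, Matrix.mul_assoc, ← Matrix.mulVec_mulVec, Matrix.dotProduct_mulVec,
      Matrix.vecMul_transpose, ← Matrix.mulVec_mulVec]
    simp [dotProduct, Matrix.mulVec_diagonal, y, mul_comm, sq, mul_assoc, mul_left_comm]
  have hyy : y ⬝ᵥ y = x ⬝ᵥ x := by
    calc y ⬝ᵥ y = (x ᵥ* Vᵀ) ⬝ᵥ y := by rw [hy, Matrix.vecMul_transpose]
    _ = x ⬝ᵥ (Vᵀ *ᵥ y) := (Matrix.dotProduct_mulVec _ _ _).symm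
    _ = x ⬝ᵥ ((Vᵀ * V) *ᵥ x) := by rw [hy, Matrix.mulVec_mulVec]
    _ = x ⬝ᵥ x := by rw [hVtV]; simp
  have hnorm : x ⬝ᵥ x = ∑ i, (y i)^2 := by
    rw [← hyy]; simp [dotProduct, sq]
  rw [hq, hnorm, Finset.mul_sum]
  apply Finset.sum_le_sum
  intro i _
  have hle : μ ⟨n - 1, Nat.sub_lt hn Nat.one_pos⟩ ≤ μ i := by
    apply hmono
    have h2 := i.isLt
    have h3 : ((⟨n - 1, Nat.sub_lt hn Nat.one_pos⟩ : Fin n) : ℕ) = n - 1 := rfl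
    exact Fin.le_def.mpr (by omega)
  nlinarith [sq_nonneg (y i)]

theorem stmt16 (n : ℕ) (hn : 0 < n) (G : SimpleGraph (Fin n))
    (μ : Fin n → ℝ) (v : Fin n → Fin n → ℝ)
    (hmono : Antitone μ)
    (heig : ∀ i, (adjMat G).mulVec (v i) = μ i • v i)
    (horth : ∀ i j : Fin n, (∑ k, v i k * v j k) = if i = j then (1 : ℝ) else 0)
    (m : ℝ) (hm0 : 0 < m) (hm1 : m < 0.1)
    (A B C : Finset (Fin n))
    (hAB : Disjoint A B) (hAC : Disjoint A C)
    (hBC : B = C ∨ Disjoint B C)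
    (hA : A.Nonempty) (hB : B.Nonempty) (hC : C.Nonempty)
    (h1 : (1 - m) * (A.card : ℝ) * (B.card : ℝ) ≤ (pairCount G A B : ℝ))
    (h2 : (1 - m) * (A.card : ℝ) * (C.card : ℝ) ≤ (pairCount G A C : ℝ))
    (h3 : (pairCount G B C : ℝ) ≤ m * (B.card : ℝ) * (C.card : ℝ)) :
    μ ⟨n - 1, by omega⟩ ≤ -((min A.card (min B.card C.card) : ℝ) / 10) := by
  rcases hBC with hbc | hbc
  · -- B = C
    subst hbc
    set a : ℝ := (A.card : ℝ) with hadef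
    set b : ℝ := (B.card : ℝ) with hbdef
    have ha1 : (1:ℝ) ≤ a := Nat.one_le_cast.mpr hA.card_pos
    have hb1 : (1:ℝ) ≤ b := Nat.one_le_cast.mpr hB.card_pos
    have ha0 : (0:ℝ) < a := by linarith
    have hb0 : (0:ℝ) < b := by linarith
    have haN : (0:ℝ) ≤ a := le_of_lt ha0
    have hbN : (0:ℝ) ≤ b := le_of_lt hb0
    set s : ℝ := min a (min b b) with hsdef
    have hsa : s ≤ a := min_le_left _ _
    have hsb : s ≤ b := le_trans (min_le_right _ _) (min_le_left _ _)
    have hs0 : 0 ≤ s := le_min haN (le_min hbN hbN)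
    have iAB : A ∩ B = ∅ := Finset.disjoint_iff_inter_eq_empty.mp hAB
    have iBA : B ∩ A = ∅ := by rw [Finset.inter_comm]; exact iAB
    have hBAe : (pairCount G B A : ℝ) = pairCount G A B := by rw [pairCount_comm]
    set x : Fin n → ℝ := (-(b*b)) • ind A + (2*(a*b)) • ind B with hx
    have key := rayleigh n hn G μ v hmono heig horth x
    have hQ : x ⬝ᵥ (adjMat G *ᵥ x) =
        (b*b)^2 * (pairCount G A A : ℝ)
        - (b*b)*(2*(a*b)) * ((pairCount G A B : ℝ) + (pairCount G B A : ℝ))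
        + (2*(a*b))^2 * (pairCount G B B : ℝ) := by
      simp only [hx, Matrix.mulVec_add, Matrix.mulVec_smul, dotProduct_add,
        add_dotProduct, dotProduct_smul, smul_dotProduct,
        smul_eq_mul, ind_quad]
      ring
    have hD : x ⬝ᵥ x = (b*b)^2 * a + (2*(a*b))^2 * b := by
      simp only [hx, dotProduct_add, add_dotProduct,
        dotProduct_smul, smul_dotProduct, smul_eq_mul, ind_dot,
        Finset.inter_self, iAB, iBA, Finset.card_empty]
      push_cast
      ring
    have hD0 : 0 < x ⬝ᵥ x := by
      rw [hD]
      have : (0:ℝ) < (b*b)^2 * a := mul_pos (pow_pos (mul_pos hb0 hb0) 2) ha0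
      nlinarith [mul_pos (pow_pos (mul_pos (mul_pos (by norm_num : (0:ℝ) < 2) ha0) hb0) 2) hb0]
    have hQle : x ⬝ᵥ (adjMat G *ᵥ x) ≤ (-(s/10)) * (x ⬝ᵥ x) := by
      rw [hQ, hD, hBAe]
      have t1 : (b*b)^2 * (pairCount G A A : ℝ) ≤ (b*b)^2 * (a*a) :=
        mul_le_mul_of_nonneg_left (pairCount_le G A A) (sq_nonneg _)
      have t2 : (b*b)*(2*(a*b)) * ((1-m)*a*b) ≤ (b*b)*(2*(a*b)) * (pairCount G A B : ℝ) :=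
        mul_le_mul_of_nonneg_left h1 (mul_nonneg (mul_nonneg hbN hbN)
          (mul_nonneg (by norm_num) (mul_nonneg haN hbN)))
      have t3 : (2*(a*b))^2 * (pairCount G B B : ℝ) ≤ (2*(a*b))^2 * (m*b*b) :=
        mul_le_mul_of_nonneg_left h3 (sq_nonneg _)
      have t4 : s*(a*(b*b*b*b)) ≤ a*(a*(b*b*b*b)) :=
        mul_le_mul_of_nonneg_right hsa (mul_nonneg haN (mul_nonneg (mul_nonneg (mul_nonneg hbN hbN) hbN) hbN))
      have t5 : s*(a*a*(b*b*b)) ≤ b*(a*a*(b*b*b)) :=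
        mul_le_mul_of_nonneg_right hsb (mul_nonneg (mul_nonneg haN haN) (mul_nonneg (mul_nonneg hbN hbN) hbN))
      have hX0 : (0:ℝ) ≤ a*a*(b*b*b*b) :=
        mul_nonneg (mul_nonneg haN haN) (mul_nonneg (mul_nonneg (mul_nonneg hbN hbN) hbN) hbN)
      have hmX : m*(a*a*(b*b*b*b)) ≤ 0.1*(a*a*(b*b*b*b)) :=
        mul_le_mul_of_nonneg_right (le_of_lt hm1) hX0
      linarith [t1, t2, t3, t4, t5, hX0, hmX]
    exact le_of_mul_le_mul_right (key.trans hQle) hD0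
  · -- Disjoint B C
    set a : ℝ := (A.card : ℝ) with hadef
    set b : ℝ := (B.card : ℝ) with hbdef
    set c : ℝ := (C.card : ℝ) with hcdef
    have ha1 : (1:ℝ) ≤ a := Nat.one_le_cast.mpr hA.card_pos
    have hb1 : (1:ℝ) ≤ b := Nat.one_le_cast.mpr hB.card_pos
    have hc1 : (1:ℝ) ≤ c := Nat.one_le_cast.mpr hC.card_pos
    have ha0 : (0:ℝ) < a := by linarith
    have hb0 : (0:ℝ) < b := by linarith
    have hc0 : (0:ℝ) < c := by linarith
    have haN : (0:ℝ) ≤ a := le_of_lt ha0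
    have hbN : (0:ℝ) ≤ b := le_of_lt hb0
    have hcN : (0:ℝ) ≤ c := le_of_lt hc0
    set s : ℝ := min a (min b c) with hsdef
    have hsa : s ≤ a := min_le_left _ _
    have hsb : s ≤ b := le_trans (min_le_right _ _) (min_le_left _ _)
    have hsc : s ≤ c := le_trans (min_le_right _ _) (min_le_right _ _)
    have hs0 : 0 ≤ s := le_min haN (le_min hbN hcN)
    have iAB : A ∩ B = ∅ := Finset.disjoint_iff_inter_eq_empty.mp hAB
    have iBA : B ∩ A = ∅ := by rw [Finset.inter_comm]; exact iAB
    have iAC : A ∩ C = ∅ := Finset.disjoint_iff_inter_eq_empty.mp hAC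
    have iCA : C ∩ A = ∅ := by rw [Finset.inter_comm]; exact iAC
    have iBC : B ∩ C = ∅ := Finset.disjoint_iff_inter_eq_empty.mp hbc
    have iCB : C ∩ B = ∅ := by rw [Finset.inter_comm]; exact iBC
    have hBAe : (pairCount G B A : ℝ) = pairCount G A B := by rw [pairCount_comm]
    have hCAe : (pairCount G C A : ℝ) = pairCount G A C := by rw [pairCount_comm]
    have hCBe : (pairCount G C B : ℝ) = pairCount G B C := by rw [pairCount_comm]
    set x : Fin n → ℝ := (-(b*c)) • ind A + (a*c) • ind B + (a*b) • ind C with hx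
    have key := rayleigh n hn G μ v hmono heig horth x
    have hQ : x ⬝ᵥ (adjMat G *ᵥ x) =
        (b*c)^2 * (pairCount G A A : ℝ)
        + (a*c)^2 * (pairCount G B B : ℝ)
        + (a*b)^2 * (pairCount G C C : ℝ)
        - (b*c)*(a*c) * ((pairCount G A B : ℝ) + (pairCount G B A : ℝ))
        - (b*c)*(a*b) * ((pairCount G A C : ℝ) + (pairCount G C A : ℝ))
        + (a*c)*(a*b) * ((pairCount G B C : ℝ) + (pairCount G C B : ℝ)) := by
      simp only [hx, Matrix.mulVec_add, Matrix.mulVec_smul, dotProduct_add,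
        add_dotProduct, dotProduct_smul, smul_dotProduct,
        smul_eq_mul, ind_quad]
      ring
    have hD : x ⬝ᵥ x = (b*c)^2 * a + (a*c)^2 * b + (a*b)^2 * c := by
      simp only [hx, dotProduct_add, add_dotProduct,
        dotProduct_smul, smul_dotProduct, smul_eq_mul, ind_dot,
        Finset.inter_self, iAB, iBA, iAC, iCA, iBC, iCB, Finset.card_empty]
      push_cast
      ring
    have hD0 : 0 < x ⬝ᵥ x := by
      rw [hD]
      have p1 : (0:ℝ) < (b*c)^2 * a := mul_pos (pow_pos (mul_pos hb0 hc0) 2) ha0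
      have p2 : (0:ℝ) < (a*c)^2 * b := mul_pos (pow_pos (mul_pos ha0 hc0) 2) hb0
      have p3 : (0:ℝ) < (a*b)^2 * c := mul_pos (pow_pos (mul_pos ha0 hb0) 2) hc0
      linarith
    have hQle : x ⬝ᵥ (adjMat G *ᵥ x) ≤ (-(s/10)) * (x ⬝ᵥ x) := by
      rw [hQ, hD, hBAe, hCAe, hCBe]
      have t1 : (b*c)^2 * (pairCount G A A : ℝ) ≤ (b*c)^2 * (a*a) :=
        mul_le_mul_of_nonneg_left (pairCount_le G A A) (sq_nonneg _)
      have t2 : (a*c)^2 * (pairCount G B B : ℝ) ≤ (a*c)^2 * (b*b) :=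
        mul_le_mul_of_nonneg_left (pairCount_le G B B) (sq_nonneg _)
      have t3 : (a*b)^2 * (pairCount G C C : ℝ) ≤ (a*b)^2 * (c*c) :=
        mul_le_mul_of_nonneg_left (pairCount_le G C C) (sq_nonneg _)
      have t4 : (b*c)*(a*c) * ((1-m)*a*b) ≤ (b*c)*(a*c) * (pairCount G A B : ℝ) :=
        mul_le_mul_of_nonneg_left h1 (mul_nonneg (mul_nonneg hbN hcN) (mul_nonneg haN hcN))
      have t5 : (b*c)*(a*b) * ((1-m)*a*c) ≤ (b*c)*(a*b) * (pairCount G A C : ℝ) :=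
        mul_le_mul_of_nonneg_left h2 (mul_nonneg (mul_nonneg hbN hcN) (mul_nonneg haN hbN))
      have t6 : (a*c)*(a*b) * (pairCount G B C : ℝ) ≤ (a*c)*(a*b) * (m*b*c) :=
        mul_le_mul_of_nonneg_left h3 (mul_nonneg (mul_nonneg haN hcN) (mul_nonneg haN hbN))
      have t7 : s*(a*(b*b*(c*c))) ≤ a*(a*(b*b*(c*c))) :=
        mul_le_mul_of_nonneg_right hsa (mul_nonneg haN (mul_nonneg (mul_nonneg hbN hbN) (mul_nonneg hcN hcN)))
      have t8 : s*(a*a*(b*(c*c))) ≤ b*(a*a*(b*(c*c))) :=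
        mul_le_mul_of_nonneg_right hsb (mul_nonneg (mul_nonneg haN haN) (mul_nonneg hbN (mul_nonneg hcN hcN)))
      have t9 : s*(a*a*(b*b*c)) ≤ c*(a*a*(b*b*c)) :=
        mul_le_mul_of_nonneg_right hsc (mul_nonneg (mul_nonneg haN haN) (mul_nonneg (mul_nonneg hbN hbN) hcN))
      have hX0 : (0:ℝ) ≤ a*a*(b*b*(c*c)) :=
        mul_nonneg (mul_nonneg haN haN) (mul_nonneg (mul_nonneg hbN hbN) (mul_nonneg hcN hcN))
      have hmX : m*(a*a*(b*b*(c*c))) ≤ 0.1*(a*a*(b*b*(c*c))) :=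
        mul_le_mul_of_nonneg_right (le_of_lt hm1) hX0
      linarith [t1, t2, t3, t4, t5, t6, t7, t8, t9, hX0, hmX]
    exact le_of_mul_le_mul_right (key.trans hQle) hD0
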